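/- Suppose a family of positive reals L(N,k) (N ∈ ℕ, 1 ≤ k ≤ 2N+1) satisfies ∑_{k=1}^{2N+1} L(N,k) = 1 for every N, and let (a_j)_{j≥1} be an enumeration of all the L(N,k) arranged in non-increasing order. If there exists C > 0 such that a_j · j^{1/2} → C as j → ∞, then C ≥ 1/2. -/

import Mathlib

open Finset Filter

/-- A strictly monotone function `Fin n → ℕ` satisfies `i ≤ f i`. -/
lemma stmt6_aux_le {n : ℕ} (f : Fin n → ℕ) (hf : StrictMono f) :
    ∀ (m : ℕ) (h : m < n), m ≤ f ⟨m, h⟩ := by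
  intro m
  induction m with
  | zero => intro h; exact Nat.zero_le _
  | succ k ih =>
    intro h
    have hk : k < n := by omega
    have h1 : f ⟨k, hk⟩ < f ⟨k + 1, h⟩ := hf (by simp [Fin.lt_def])
    have h2 := ih hk
    omega

/-- For an antitone nonnegative function, the sum over any finset of naturals is at most
the sum over an initial segment of the same cardinality. -/
lemma stmt6_sum_le_sum_range {f : ℕ → ℝ} (hf : Antitone f) (h0 : ∀ j, 0 ≤ f j)
    (s : Finset ℕ) : ∑ j ∈ s, f j ≤ ∑ j ∈ Finset.range s.card, f j := by
  classical
  have himg : Finset.univ.image (fun i => s.orderEmbOfFin rfl i) = s := by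
    ext x
    simp only [Finset.mem_image, Finset.mem_univ, true_and]
    constructor
    · rintro ⟨i, rfl⟩; exact s.orderEmbOfFin_mem rfl i
    · intro hx
      have hx2 : x ∈ Set.range (s.orderEmbOfFin rfl) := by
        rw [Finset.range_orderEmbOfFin]; exact hx
      obtain ⟨i, hi⟩ := hx2; exact ⟨i, hi⟩
  have hsum : ∑ j ∈ s, f j = ∑ i : Fin s.card, f (s.orderEmbOfFin rfl i) := by
    conv_lhs => rw [← himg]
    exact Finset.sum_image (fun x _ y _ h => (s.orderEmbOfFin rfl).injective h)
  rw [hsum, ← Fin.sum_univ_eq_sum_range (fun i => f i) s.card]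
  apply Finset.sum_le_sum
  intro i _
  apply hf
  have := stmt6_aux_le (fun i => s.orderEmbOfFin rfl i)
    ((s.orderEmbOfFin rfl).strictMono) i.1 i.2
  simpa using this

lemma stmt6_sum_odd (M : ℕ) : ∑ N ∈ Finset.range M, (2 * N + 1) = M ^ 2 := by
  induction M with
  | zero => simp
  | succ m ih => rw [Finset.sum_range_succ, ih]; ring

theorem stmt6 (L : (N : ℕ) → Fin (2 * N + 1) → ℝ)
    (hpos : ∀ N k, 0 < L N k) (hsum : ∀ N, ∑ k, L N k = 1)
    (a : ℕ → ℝ) (hanti : Antitone a)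
    (e : ℕ → Σ N : ℕ, Fin (2 * N + 1)) (he : Function.Bijective e)
    (hae : ∀ j, a j = L (e j).1 (e j).2)
    (C : ℝ) (hC : 0 < C)
    (hlim : Tendsto (fun j : ℕ => a j * ((j : ℝ) + 1) ^ ((1 / 2 : ℝ))) atTop (nhds C)) :
    1 / 2 ≤ C := by
  classical
  by_contra hcon
  push_neg at hcon
  set c : ℝ := (C + 1 / 2) / 2 with hc_def
  have hcpos : 0 < c := by positivity
  have hclt : c < 1 / 2 := by rw [hc_def]; linarith
  have hCc : C < c := by rw [hc_def]; linarith
  have hapos : ∀ j, 0 < a j := fun j => (hae j) ▸ hpos _ _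
  have hanti2 : Antitone (fun j => a j ^ 2) := fun i j hij =>
    pow_le_pow_left₀ (hapos j).le (hanti hij) 2
  have h0sq : ∀ j, 0 ≤ a j ^ 2 := fun j => sq_nonneg _
  -- eventual bound
  obtain ⟨j₀, hj₀⟩ := (eventually_atTop).mp (hlim.eventually_lt_const hCc)
  have key : ∀ j, j₀ ≤ j → a j ^ 2 ≤ c ^ 2 / ((j : ℝ) + 1) := by
    intro j hj
    have hb := hj₀ j hj
    have ht : (((j : ℝ) + 1) ^ ((1 / 2 : ℝ))) ^ 2 = (j : ℝ) + 1 := by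
      rw [← Real.rpow_natCast (((j : ℝ) + 1) ^ ((1 / 2 : ℝ))) 2,
        ← Real.rpow_mul (show (0:ℝ) ≤ (j : ℝ) + 1 by positivity)]
      norm_num
    have hnn : 0 ≤ a j * ((j : ℝ) + 1) ^ ((1 / 2 : ℝ)) :=
      mul_nonneg (hapos j).le (Real.rpow_nonneg (by positivity) _)
    have hsq : a j ^ 2 * ((j : ℝ) + 1) ≤ c ^ 2 := by
      have h2 := mul_self_le_mul_self hnn hb.le
      nlinarith [h2, ht]
    exact (le_div_iff₀ (by positivity)).mpr hsq
  -- upper bound on partial sums of a_j^2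
  set B : ℝ := ∑ j ∈ Finset.range j₀, a j ^ 2 with hB_def
  have hupper : ∀ n : ℕ, ∑ j ∈ Finset.range n, a j ^ 2
      ≤ B + c ^ 2 * (1 + Real.log n) := by
    intro n
    have hharm : ∑ j ∈ Finset.range n, c ^ 2 / ((j : ℝ) + 1)
        ≤ c ^ 2 * (1 + Real.log n) := by
      have h1 : ∑ j ∈ Finset.range n, c ^ 2 / ((j : ℝ) + 1)
          = c ^ 2 * ((harmonic n : ℚ) : ℝ) := by
        rw [harmonic]
        push_cast
        rw [Finset.mul_sum]
        refine Finset.sum_congr rfl (fun j _ => ?_)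
        rw [div_eq_mul_inv]
      rw [h1]
      have := harmonic_le_one_add_log n
      nlinarith [sq_nonneg c, this]
    rcases le_or_gt n j₀ with hn | hn
    · have h1 : ∑ j ∈ Finset.range n, a j ^ 2 ≤ B := by
        rw [hB_def]
        exact Finset.sum_le_sum_of_subset_of_nonneg
          (Finset.range_subset_range.mpr hn) (fun j _ _ => h0sq j)
      have h2 : 0 ≤ ∑ j ∈ Finset.range n, c ^ 2 / ((j : ℝ) + 1) := by
        apply Finset.sum_nonneg; intro j _; positivity
      nlinarith [hharm]
    · have hsplit : ∑ j ∈ Finset.range n, a j ^ 2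
          = B + ∑ j ∈ Finset.Ico j₀ n, a j ^ 2 := by
        rw [hB_def]
        simp only [Finset.range_eq_Ico]
        exact (Finset.sum_Ico_consecutive _ (Nat.zero_le j₀) hn.le).symm
      rw [hsplit]
      have h1 : ∑ j ∈ Finset.Ico j₀ n, a j ^ 2
          ≤ ∑ j ∈ Finset.Ico j₀ n, c ^ 2 / ((j : ℝ) + 1) := by
        refine Finset.sum_le_sum (fun j hj => key j (Finset.mem_Ico.mp hj).1)
      have h2 : ∑ j ∈ Finset.Ico j₀ n, c ^ 2 / ((j : ℝ) + 1)
          ≤ ∑ j ∈ Finset.range n, c ^ 2 / ((j : ℝ) + 1) := by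
        rw [Finset.range_eq_Ico]
        exact Finset.sum_le_sum_of_subset_of_nonneg
          (Finset.Ico_subset_Ico (Nat.zero_le _) le_rfl)
          (fun j _ _ => by positivity)
      linarith [hharm]
  -- Cauchy-Schwarz lower bound for each block
  have hCS : ∀ N : ℕ, 1 / (2 * (N : ℝ) + 2) ≤ ∑ k, L N k ^ 2 := by
    intro N
    have h := sq_sum_le_card_mul_sum_sq (s := (Finset.univ : Finset (Fin (2 * N + 1))))
      (f := L N)
    rw [hsum N] at h
    simp only [Finset.card_univ, Fintype.card_fin] at h
    have hcard : (0:ℝ) < 2 * (N : ℝ) + 1 := by positivity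
    have h2 : 1 / (2 * (N : ℝ) + 1) ≤ ∑ k, L N k ^ 2 := by
      rw [div_le_iff₀ hcard]
      have : ((2 * N + 1 : ℕ) : ℝ) = 2 * (N : ℝ) + 1 := by push_cast; ring
      nlinarith [h]
    refine le_trans ?_ h2
    apply div_le_div_of_nonneg_left (by norm_num) hcard (by linarith)
  -- lower bound on block sums
  have hlow : ∀ M : ℕ, (1 / 2) * Real.log (M + 1)
      ≤ ∑ N ∈ Finset.range M, ∑ k, L N k ^ 2 := by
    intro M
    have h1 : ∑ N ∈ Finset.range M, 1 / (2 * (N : ℝ) + 2)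
        ≤ ∑ N ∈ Finset.range M, ∑ k, L N k ^ 2 :=
      Finset.sum_le_sum (fun N _ => hCS N)
    have h2 : ∑ N ∈ Finset.range M, 1 / (2 * (N : ℝ) + 2)
        = (1 / 2) * ((harmonic M : ℚ) : ℝ) := by
      rw [harmonic]
      push_cast
      rw [Finset.mul_sum]
      refine Finset.sum_congr rfl (fun N _ => ?_)
      have hN : (N : ℝ) + 1 ≠ 0 := by positivity
      field_simp
    rw [h2] at h1
    have h3 := log_add_one_le_harmonic M
    have h4 : (1 / 2 : ℝ) * Real.log (M + 1) ≤ (1 / 2) * ((harmonic M : ℚ) : ℝ) := by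
      push_cast at h3 ⊢
      linarith
    linarith
  -- reindexing: block sums equal sums over a set of indices of card M^2
  have hmid : ∀ M : ℕ, ∑ N ∈ Finset.range M, ∑ k, L N k ^ 2
      ≤ ∑ j ∈ Finset.range (M ^ 2), a j ^ 2 := by
    intro M
    set g := Equiv.ofBijective e he with hg_def
    set T : Finset ((N : ℕ) × Fin (2 * N + 1)) :=
      (Finset.range M).sigma (fun N => Finset.univ) with hT_def
    set S : Finset ℕ := T.image g.symm with hS_def
    have hTsum : ∑ p ∈ T, L p.1 p.2 ^ 2 = ∑ N ∈ Finset.range M, ∑ k, L N k ^ 2 := by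
      rw [hT_def, Finset.sum_sigma]
    have hSsum : ∑ j ∈ S, a j ^ 2 = ∑ p ∈ T, L p.1 p.2 ^ 2 := by
      rw [hS_def, Finset.sum_image (fun x _ y _ h => g.symm.injective h)]
      refine Finset.sum_congr rfl (fun p _ => ?_)
      rw [hae]
      have hep : e (g.symm p) = p := Equiv.ofBijective_apply_symm_apply e he p
      rw [hep]
    have hScard : S.card = M ^ 2 := by
      rw [hS_def, Finset.card_image_of_injective _ g.symm.injective, hT_def,
        Finset.card_sigma]
      simp only [Finset.card_univ, Fintype.card_fin]
      exact stmt6_sum_odd M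
    calc ∑ N ∈ Finset.range M, ∑ k, L N k ^ 2 = ∑ j ∈ S, a j ^ 2 := by
          rw [hSsum, hTsum]
      _ ≤ ∑ j ∈ Finset.range S.card, a j ^ 2 := stmt6_sum_le_sum_range hanti2 h0sq S
      _ = ∑ j ∈ Finset.range (M ^ 2), a j ^ 2 := by rw [hScard]
  -- combine: for every M ≥ 1
  have hcomb : ∀ M : ℕ, 1 ≤ M → (1 / 2 - 2 * c ^ 2) * Real.log M ≤ B + c ^ 2 := by
    intro M hM
    have h1 := hlow M
    have h2 := hmid M
    have h3 := hupper (M ^ 2)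
    have hlogsq : Real.log ((M ^ 2 : ℕ) : ℝ) = 2 * Real.log M := by
      push_cast
      rw [Real.log_pow]
      push_cast; ring
    rw [hlogsq] at h3
    have h4 : Real.log M ≤ Real.log (M + 1) := by
      apply Real.log_le_log (by exact_mod_cast hM)
      linarith
    nlinarith [h1, h2, h3, h4]
  -- contradiction
  have hec : 0 < 1 / 2 - 2 * c ^ 2 := by nlinarith
  set R : ℝ := (B + c ^ 2) / (1 / 2 - 2 * c ^ 2) with hR_def
  set M : ℕ := ⌈Real.exp (R + 1)⌉₊ with hM_def
  have hM1 : 1 ≤ M := Nat.one_le_ceil_iff.mpr (Real.exp_pos _)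
  have hMlog : R + 1 ≤ Real.log M := by
    have h1 : Real.exp (R + 1) ≤ (M : ℝ) := Nat.le_ceil _
    have h2 : (0:ℝ) < M := lt_of_lt_of_le (Real.exp_pos _) h1
    calc R + 1 = Real.log (Real.exp (R + 1)) := (Real.log_exp _).symm
      _ ≤ Real.log M := Real.log_le_log (Real.exp_pos _) h1
  have hfin := hcomb M hM1
  have : (1 / 2 - 2 * c ^ 2) * Real.log M ≥ (1 / 2 - 2 * c ^ 2) * (R + 1) :=
    mul_le_mul_of_nonneg_left hMlog hec.le
  have hRR : (1 / 2 - 2 * c ^ 2) * R = B + c ^ 2 := by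
    rw [hR_def, ← mul_div_assoc, mul_comm, mul_div_assoc, div_self hec.ne', mul_one]
  nlinarith [hfin, this, hRR, hec]
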